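/- Whiskering of 3-tracks by 1-tracks is well defined: if J and J' are rank-3 homotopic good 3-paths in M, γ and γ' are rank-1 homotopic 1-paths, and γ(1) equals the single point J(ℝ²×{0}), then the left whiskerings γ∘J and γ'∘J' are good 3-paths and are rank-3 homotopic. -/

import Mathlib

open scoped Manifold

variable (E : Type*) [NormedAddCommGroup E] [NormedSpace ℝ E] [FiniteDimensional ℝ E]
variable {M : Type*} [TopologicalSpace M] [ChartedSpace E M]
  [IsManifold 𝓘(ℝ, E) (⊤ : ℕ∞) M]

/-- A 1-path in `M`: a smooth map `ℝ → M` that is constant near `(-∞, 0]` and near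
`[1, ∞)` (in the sense of the `ε`-conditions). -/
def IsOnePath (γ : ℝ → M) : Prop :=
  ContMDiff 𝓘(ℝ, ℝ) 𝓘(ℝ, E) (⊤ : ℕ∞) γ ∧
    ∃ ε > (0 : ℝ), (∀ t ≤ ε, γ t = γ 0) ∧ (∀ t, 1 - ε ≤ t → γ t = γ 1)

/-- A 2-path in `M`, as a smooth map `ℝ × ℝ → M` with coordinates `(s, t)`,
constant near the boundary in each variable, whose images at `t = 0` and `t = 1`
are single points. -/
def IsTwoPath (g : ℝ × ℝ → M) : Prop :=
  ContMDiff 𝓘(ℝ, ℝ × ℝ) 𝓘(ℝ, E) (⊤ : ℕ∞) g ∧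
    (∃ ε > (0 : ℝ),
      (∀ s t, s ≤ ε → g (s, t) = g (0, t)) ∧
      (∀ s t, 1 - ε ≤ s → g (s, t) = g (1, t)) ∧
      (∀ s t, t ≤ ε → g (s, t) = g (s, 0)) ∧
      (∀ s t, 1 - ε ≤ t → g (s, t) = g (s, 1))) ∧
    (∀ s s', g (s, 0) = g (s', 0)) ∧ (∀ s s', g (s, 1) = g (s', 1))

/-- A rank-1 homotopy: a 2-path whose differential has rank at most 1 at every point. -/
def IsRank1Homotopy (h : ℝ × ℝ → M) : Prop :=
  IsTwoPath E h ∧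
    ∀ p : ℝ × ℝ,
      Module.finrank ℝ
        (LinearMap.range (mfderiv 𝓘(ℝ, ℝ × ℝ) 𝓘(ℝ, E) h p).toLinearMap) ≤ 1

/-- Two 1-paths are rank-1 homotopic if they are joined by a rank-1 homotopy. -/
def Rank1Homotopic (γ γ' : ℝ → M) : Prop :=
  ∃ h : ℝ × ℝ → M, IsRank1Homotopy E h ∧ (∀ t, h (0, t) = γ t) ∧ (∀ t, h (1, t) = γ' t)

/-- A 3-path in `M`, as a smooth map `ℝ × ℝ × ℝ → M` with coordinates `(r, s, t)`. -/
def IsThreePath (α : ℝ × ℝ × ℝ → M) : Prop :=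
  ContMDiff 𝓘(ℝ, ℝ × ℝ × ℝ) 𝓘(ℝ, E) (⊤ : ℕ∞) α ∧
    (∃ ε > (0 : ℝ),
      (∀ r s t, r ≤ ε → α (r, s, t) = α (0, s, t)) ∧
      (∀ r s t, 1 - ε ≤ r → α (r, s, t) = α (1, s, t)) ∧
      (∀ r s t, s ≤ ε → α (r, s, t) = α (r, 0, t)) ∧
      (∀ r s t, 1 - ε ≤ s → α (r, s, t) = α (r, 1, t)) ∧
      (∀ r s t, t ≤ ε → α (r, s, t) = α (r, s, 0)) ∧
      (∀ r s t, 1 - ε ≤ t → α (r, s, t) = α (r, s, 1))) ∧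
    (∀ r s r' s', α (r, s, 0) = α (r', s', 0)) ∧
    (∀ r s r' s', α (r, s, 1) = α (r', s', 1))

/-- A rank-2 homotopy: a 3-path whose differential has rank at most 2 at every point and
whose restrictions to `s = 0` and `s = 1` are rank-1 homotopies. -/
def IsRank2Homotopy (α : ℝ × ℝ × ℝ → M) : Prop :=
  IsThreePath E α ∧
    (∀ p : ℝ × ℝ × ℝ,
      Module.finrank ℝ
        (LinearMap.range (mfderiv 𝓘(ℝ, ℝ × ℝ × ℝ) 𝓘(ℝ, E) α p).toLinearMap) ≤ 2) ∧
    IsRank1Homotopy E (fun p : ℝ × ℝ => α (p.1, 0, p.2)) ∧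
    IsRank1Homotopy E (fun p : ℝ × ℝ => α (p.1, 1, p.2))

/-- `α` is a rank-2 homotopy from the 2-path `g` to the 2-path `g'`. -/
def Rank2HomotopyFrom (α : ℝ × ℝ × ℝ → M) (g g' : ℝ × ℝ → M) : Prop :=
  IsRank2Homotopy E α ∧ (∀ s t, α (0, s, t) = g (s, t)) ∧ (∀ s t, α (1, s, t) = g' (s, t))

/-- Two 2-paths are rank-2 homotopic if they are joined by a rank-2 homotopy. -/
def Rank2Homotopic (g g' : ℝ × ℝ → M) : Prop :=
  ∃ α : ℝ × ℝ × ℝ → M, Rank2HomotopyFrom E α g g'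

/-- The laminatedness condition for a map `ℝ × ℝ × ℝ → M` with coordinates `(r, s, t)`,
expressed via the partial derivatives (the images of the coordinate vectors under the
differential). -/
def IsLaminated (α : ℝ × ℝ × ℝ → M) : Prop :=
  ∀ r s : ℝ,
    (∀ t : ℝ, ∃ a b : ℝ, (a, b) ≠ (0, 0) ∧
        a • mfderiv 𝓘(ℝ, ℝ × ℝ × ℝ) 𝓘(ℝ, E) α (r, s, t) (1, 0, 0) +
          b • mfderiv 𝓘(ℝ, ℝ × ℝ × ℝ) 𝓘(ℝ, E) α (r, s, t) (0, 0, 1) = 0) ∨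
    (∀ t : ℝ, ∃ a b : ℝ, (a, b) ≠ (0, 0) ∧
        a • mfderiv 𝓘(ℝ, ℝ × ℝ × ℝ) 𝓘(ℝ, E) α (r, s, t) (0, 1, 0) +
          b • mfderiv 𝓘(ℝ, ℝ × ℝ × ℝ) 𝓘(ℝ, E) α (r, s, t) (0, 0, 1) = 0) ∨
    (∃ a b : ℝ, (a, b) ≠ (0, 0) ∧ ∀ t : ℝ,
        a • mfderiv 𝓘(ℝ, ℝ × ℝ × ℝ) 𝓘(ℝ, E) α (r, s, t) (1, 0, 0) +
          b • mfderiv 𝓘(ℝ, ℝ × ℝ × ℝ) 𝓘(ℝ, E) α (r, s, t) (0, 1, 0) = 0)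

/-- A laminated rank-2 homotopy. -/
def IsLaminatedRank2Homotopy (α : ℝ × ℝ × ℝ → M) : Prop :=
  IsRank2Homotopy E α ∧ IsLaminated E α

/-- Two 2-paths are laminated rank-2 homotopic if they are joined by a laminated
rank-2 homotopy. -/
def LamRank2Homotopic (g g' : ℝ × ℝ → M) : Prop :=
  ∃ α : ℝ × ℝ × ℝ → M, IsLaminatedRank2Homotopy E α ∧
    (∀ s t, α (0, s, t) = g (s, t)) ∧ (∀ s t, α (1, s, t) = g' (s, t))

/-- A good 3-path: a 3-path `J` such that `J (r, 0, t)` and `J (r, 1, t)` do not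
depend on `r`. -/
def IsGoodThreePath (J : ℝ × ℝ × ℝ → M) : Prop :=
  IsThreePath E J ∧ (∀ r r' t, J (r, 0, t) = J (r', 0, t)) ∧
    (∀ r r' t, J (r, 1, t) = J (r', 1, t))

/-- A 4-path in `M`, as a smooth map `ℝ × ℝ × ℝ × ℝ → M` with coordinates `(q, r, s, t)`. -/
def IsFourPath (W : ℝ × ℝ × ℝ × ℝ → M) : Prop :=
  ContMDiff 𝓘(ℝ, ℝ × ℝ × ℝ × ℝ) 𝓘(ℝ, E) (⊤ : ℕ∞) W ∧
    (∃ ε > (0 : ℝ),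
      (∀ q r s t, q ≤ ε → W (q, r, s, t) = W (0, r, s, t)) ∧
      (∀ q r s t, 1 - ε ≤ q → W (q, r, s, t) = W (1, r, s, t)) ∧
      (∀ q r s t, r ≤ ε → W (q, r, s, t) = W (q, 0, s, t)) ∧
      (∀ q r s t, 1 - ε ≤ r → W (q, r, s, t) = W (q, 1, s, t)) ∧
      (∀ q r s t, s ≤ ε → W (q, r, s, t) = W (q, r, 0, t)) ∧
      (∀ q r s t, 1 - ε ≤ s → W (q, r, s, t) = W (q, r, 1, t)) ∧
      (∀ q r s t, t ≤ ε → W (q, r, s, t) = W (q, r, s, 0)) ∧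
      (∀ q r s t, 1 - ε ≤ t → W (q, r, s, t) = W (q, r, s, 1))) ∧
    (∀ q r s q' r' s', W (q, r, s, 0) = W (q', r', s', 0)) ∧
    (∀ q r s q' r' s', W (q, r, s, 1) = W (q', r', s', 1))

/-- A rank-3 homotopy: a 4-path whose differential has rank at most 3 at every point,
whose restrictions to `r = 0` and `r = 1` are laminated rank-2 homotopies, and whose
restrictions to `s = 0` and `s = 1` are independent of `r` and are rank-1 homotopies. -/
def IsRank3Homotopy (W : ℝ × ℝ × ℝ × ℝ → M) : Prop :=
  IsFourPath E W ∧
    (∀ p : ℝ × ℝ × ℝ × ℝ,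
      Module.finrank ℝ
        (LinearMap.range (mfderiv 𝓘(ℝ, ℝ × ℝ × ℝ × ℝ) 𝓘(ℝ, E) W p).toLinearMap) ≤ 3) ∧
    IsLaminatedRank2Homotopy E (fun p : ℝ × ℝ × ℝ => W (p.1, 0, p.2.1, p.2.2)) ∧
    IsLaminatedRank2Homotopy E (fun p : ℝ × ℝ × ℝ => W (p.1, 1, p.2.1, p.2.2)) ∧
    (∀ q r r' t, W (q, r, 0, t) = W (q, r', 0, t)) ∧
    (∀ q r r' t, W (q, r, 1, t) = W (q, r', 1, t)) ∧
    IsRank1Homotopy E (fun p : ℝ × ℝ => W (p.1, 0, 0, p.2)) ∧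
    IsRank1Homotopy E (fun p : ℝ × ℝ => W (p.1, 0, 1, p.2))

/-- `W` is a rank-3 homotopy from the good 3-path `J` to the good 3-path `J'`. -/
def Rank3HomotopyFrom (W : ℝ × ℝ × ℝ × ℝ → M) (J J' : ℝ × ℝ × ℝ → M) : Prop :=
  IsRank3Homotopy E W ∧ (∀ r s t, W (0, r, s, t) = J (r, s, t)) ∧
    (∀ r s t, W (1, r, s, t) = J' (r, s, t))

/-- Two good 3-paths are rank-3 homotopic if they are joined by a rank-3 homotopy. -/
def Rank3Homotopic (J J' : ℝ × ℝ × ℝ → M) : Prop :=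
  ∃ W : ℝ × ℝ × ℝ × ℝ → M, Rank3HomotopyFrom E W J J'

/-- Left whiskering of a 3-path `J` with a 1-path `γ`. -/
noncomputable def leftWhisker3 (γ : ℝ → M) (J : ℝ × ℝ × ℝ → M) : ℝ × ℝ × ℝ → M := fun p =>
  if p.2.2 ≤ 1 / 2 then γ (2 * p.2.2) else J (p.1, p.2.1, 2 * p.2.2 - 1)

/-! Run the two homotopies one after the other: for `q ≤ 1/2` the whisker follows `h (2q, ·)`
while the 3-path stays `J = W (0, ·)`, for `q ≥ 1/2` the whisker stays `γ' = h (1, ·)` while the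
3-path follows `W (2q - 1, ·)`. On each quarter of the `(q, t)`-square this is `h` or `W`
precomposed with an affine map, and neighbouring pieces agree on a band around the seams since
`h` and `W` are constant near the edges of their squares. So near every point the glued map equals
one piece, and smoothness and every rank bound of `h` and of the slices of `W` pass to it.
Lamination of an `r`-slice holds by `(i)` for `q ≤ 1/2` (the `h`-piece has rank `≤ 1`, the
`J`-piece does not depend on `q`), and for `q > 1/2` it is that of the `r`-slice of `W` up to the
rescaling `q ↦ 2q - 1`, `t ↦ 2t - 1`. The whiskered 3-paths are the ends `q = 0, 1` of this
4-path, hence good. -/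

section Gluing

open Filter Topology

variable {X Y : Type*} [TopologicalSpace X]

noncomputable def glueAlong (ℓ : X → ℝ) (c : ℝ) (f g : X → Y) : X → Y :=
  fun x => if ℓ x ≤ c then f x else g x

theorem glueAlong_eventuallyEq_left {ℓ : X → ℝ} (hℓ : Continuous ℓ) {c δ : ℝ} (hδ : 0 < δ)
    {f g : X → Y} (hfg : ∀ y, c < ℓ y → ℓ y < c + δ → f y = g y) {x : X} (hx : ℓ x ≤ c) :
    glueAlong ℓ c f g =ᶠ[𝓝 x] f := by
  filter_upwards [hℓ.continuousAt.eventually_lt continuousAt_const (by linarith : ℓ x < c + δ)]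
    with y hy
  by_cases hyc : ℓ y ≤ c
  · simp [glueAlong, hyc]
  · simp [glueAlong, hyc, hfg y (not_le.1 hyc) hy]

theorem glueAlong_eventuallyEq_right {ℓ : X → ℝ} (hℓ : Continuous ℓ) {c : ℝ} {f g : X → Y}
    {x : X} (hx : c < ℓ x) : glueAlong ℓ c f g =ᶠ[𝓝 x] g := by
  filter_upwards [continuousAt_const.eventually_lt hℓ.continuousAt hx] with y hy
  simp [glueAlong, not_le.2 hy]

end Gluing

section MFDeriv

variable {F : Type*} [NormedAddCommGroup F] [NormedSpace ℝ F] {H : Type*} [TopologicalSpace H]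
  {I : ModelWithCorners ℝ F H} {N : Type*} [TopologicalSpace N] [ChartedSpace H N]
  {P Q : Type*} [NormedAddCommGroup P] [NormedSpace ℝ P] [NormedAddCommGroup Q] [NormedSpace ℝ Q]

theorem mfderiv_apply_eq_mfderiv_line {f : P → N} {x : P} (hf : MDifferentiableAt 𝓘(ℝ, P) I f x)
    (v : P) :
    (mfderiv 𝓘(ℝ, P) I f x v : F) = mfderiv 𝓘(ℝ, ℝ) I (fun τ : ℝ => f (x + τ • v)) 0 1 := by
  have key : ∀ c : ℝ → P, HasFDerivAt c (ContinuousLinearMap.toSpanSingleton ℝ v) 0 → c 0 = x →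
      (mfderiv 𝓘(ℝ, P) I f x v : F) = mfderiv 𝓘(ℝ, ℝ) I (f ∘ c) 0 1 := by
    rintro c hc rfl
    have hc' := hasMFDerivAt_iff_hasFDerivAt.2 hc
    rw [mfderiv_comp_apply 0 hf hc'.mdifferentiableAt, hc'.mfderiv]
    exact congrArg _ (one_smul ℝ v).symm
  refine key _ ?_ (by simp)
  simpa using ((hasDerivAt_id (0 : ℝ)).smul_const v).const_add x |>.hasFDerivAt

theorem mfderiv_apply_eq_of_forall_add_smul {f : P → N} {g : Q → N} {x : P} {y : Q} {v : P}
    {w : Q} (hf : MDifferentiableAt 𝓘(ℝ, P) I f x) (hg : MDifferentiableAt 𝓘(ℝ, Q) I g y)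
    (hfg : ∀ τ : ℝ, f (x + τ • v) = g (y + τ • w)) :
    (mfderiv 𝓘(ℝ, P) I f x v : F) = mfderiv 𝓘(ℝ, Q) I g y w :=
  (mfderiv_apply_eq_mfderiv_line hf v).trans <|
    (congrArg (fun φ : ℝ → N => (mfderiv 𝓘(ℝ, ℝ) I φ 0 1 : F)) (funext hfg)).trans
      (mfderiv_apply_eq_mfderiv_line hg w).symm

theorem mfderiv_apply_eq_zero_of_forall_add_smul {f : P → N} {x v : P}
    (hf : MDifferentiableAt 𝓘(ℝ, P) I f x) (hfv : ∀ τ : ℝ, f (x + τ • v) = f x) :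
    (mfderiv 𝓘(ℝ, P) I f x v : F) = 0 :=
  (mfderiv_apply_eq_of_forall_add_smul hf hf (w := (0 : P)) (by simpa using hfv)).trans
    (map_zero _)

theorem mfderiv_comp_rescale_apply {G : ℝ × ℝ × ℝ → N}
    (hG : MDifferentiable 𝓘(ℝ, ℝ × ℝ × ℝ) I G) (x : ℝ × ℝ × ℝ) :
    let D := mfderiv 𝓘(ℝ, ℝ × ℝ × ℝ) I (fun x => G (2 * x.1 - 1, x.2.1, 2 * x.2.2 - 1)) x
    let D' := mfderiv 𝓘(ℝ, ℝ × ℝ × ℝ) I G (2 * x.1 - 1, x.2.1, 2 * x.2.2 - 1)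
    (D (1, 0, 0) : F) = (2 : ℝ) • D' (1, 0, 0) ∧ (D (0, 1, 0) : F) = D' (0, 1, 0) ∧
      (D (0, 0, 1) : F) = (2 : ℝ) • D' (0, 0, 1) := by
  have hGB : MDifferentiableAt 𝓘(ℝ, ℝ × ℝ × ℝ) I
      (fun x => G (2 * x.1 - 1, x.2.1, 2 * x.2.2 - 1)) x :=
    (hG _).comp x ((by fun_prop : Differentiable ℝ fun x : ℝ × ℝ × ℝ =>
      (2 * x.1 - 1, x.2.1, 2 * x.2.2 - 1)) x).mdifferentiableAt
  refine ⟨(mfderiv_apply_eq_of_forall_add_smul hGB (hG _)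
      (w := (2 : ℝ) • ((1 : ℝ), (0 : ℝ), (0 : ℝ))) fun τ => ?_).trans (map_smul _ _ _),
    mfderiv_apply_eq_of_forall_add_smul hGB (hG _) (w := ((0 : ℝ), (1 : ℝ), (0 : ℝ))) fun τ => ?_,
    (mfderiv_apply_eq_of_forall_add_smul hGB (hG _)
      (w := (2 : ℝ) • ((0 : ℝ), (0 : ℝ), (1 : ℝ))) fun τ => ?_).trans (map_smul _ _ _)⟩ <;>
  · simp only [Prod.smul_mk, Prod.mk_add_mk, Prod.fst_add, Prod.snd_add, smul_eq_mul]
    ring_nf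

def MFDerivRankLE (I : ModelWithCorners ℝ F H) (k : ℕ) (f : P → N) : Prop :=
  ∀ x, Module.finrank ℝ (LinearMap.range (mfderiv 𝓘(ℝ, P) I f x).toLinearMap) ≤ k

theorem MFDerivRankLE.mono {k l : ℕ} {f : P → N} (hf : MFDerivRankLE I k f) (hkl : k ≤ l) :
    MFDerivRankLE I l f :=
  fun x => (hf x).trans hkl

theorem MFDerivRankLE.comp [FiniteDimensional ℝ Q] {k : ℕ} {G : Q → N} (hG : MFDerivRankLE I k G)
    (hGd : MDifferentiable 𝓘(ℝ, Q) I G) {A : P → Q} (hA : Differentiable ℝ A) :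
    MFDerivRankLE I k fun x => G (A x) := by
  intro x
  have : FiniteDimensional ℝ (TangentSpace 𝓘(ℝ, Q) (A x)) := ‹FiniteDimensional ℝ Q›
  rw [show (fun x => G (A x)) = G ∘ A from rfl,
    mfderiv_comp x (hGd _) (hA x).mdifferentiableAt]
  refine (Submodule.finrank_mono ?_).trans (hG (A x))
  rintro _ ⟨v, rfl⟩
  exact ⟨_, rfl⟩

end MFDeriv

section Lamination

open Module

theorem exists_smul_add_smul_eq_zero_of_finrank_range_le_one {K V W : Type*} [Field K]
    [AddCommGroup V] [Module K V] [AddCommGroup W] [Module K W] (D : V →ₗ[K] W)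
    [Module.Finite K (LinearMap.range D)] (hD : finrank K (LinearMap.range D) ≤ 1) (u v : V) :
    ∃ a b : K, (a, b) ≠ (0, 0) ∧ a • D u + b • D v = 0 := by
  by_contra! hne
  have hli : LinearIndependent K ![D u, D v] := LinearIndependent.pair_iff.2 fun a b hab => by
    by_contra h
    exact hne a b (by simpa [Prod.ext_iff, not_and_or] using h) hab
  have hle : Submodule.span K (Set.range ![D u, D v]) ≤ LinearMap.range D := by
    rw [Submodule.span_le]
    rintro _ ⟨i, rfl⟩
    fin_cases i <;> exact ⟨_, rfl⟩
  have := Submodule.finrank_mono hle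
  rw [finrank_span_eq_card hli, Fintype.card_fin] at this
  omega

variable {F : Type*} [NormedAddCommGroup F] [NormedSpace ℝ F]

/-- The clause of `IsLaminated E α` at a fixed `(r, s)`, for `D t` the differential of `α` at
`(r, s, t)`. -/
def LaminatedAlong (D : ℝ → (ℝ × ℝ × ℝ →L[ℝ] F)) : Prop :=
  (∀ t, ∃ a b : ℝ, (a, b) ≠ (0, 0) ∧ a • D t (1, 0, 0) + b • D t (0, 0, 1) = 0) ∨
    (∀ t, ∃ a b : ℝ, (a, b) ≠ (0, 0) ∧ a • D t (0, 1, 0) + b • D t (0, 0, 1) = 0) ∨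
    ∃ a b : ℝ, (a, b) ≠ (0, 0) ∧ ∀ t, a • D t (1, 0, 0) + b • D t (0, 1, 0) = 0

theorem LaminatedAlong.of_forall {D : ℝ → (ℝ × ℝ × ℝ →L[ℝ] F)}
    (hD : ∀ t, finrank ℝ (LinearMap.range (D t).toLinearMap) ≤ 1 ∨ D t (1, 0, 0) = 0) :
    LaminatedAlong D :=
  Or.inl fun t => (hD t).elim
    (fun h => exists_smul_add_smul_eq_zero_of_finrank_range_le_one _ h _ _)
    (fun h => ⟨1, 0, by simp, by simp [h]⟩)

theorem LaminatedAlong.of_rescale {D D' : ℝ → (ℝ × ℝ × ℝ →L[ℝ] F)} (hD : LaminatedAlong D)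
    {φ : ℝ → ℝ} {c₁ c₃ : ℝ} (hc₁ : c₁ ≠ 0) (hc₃ : c₃ ≠ 0)
    (hD' : ∀ t, (D' t (1, 0, 0) = 0 ∧ D' t (0, 1, 0) = 0) ∨
      (D' t (1, 0, 0) = c₁ • D (φ t) (1, 0, 0) ∧ D' t (0, 1, 0) = D (φ t) (0, 1, 0) ∧
        D' t (0, 0, 1) = c₃ • D (φ t) (0, 0, 1))) :
    LaminatedAlong D' := by
  rcases hD with hD | hD | ⟨a, b, hab, hD⟩
  · refine Or.inl fun t => ?_
    rcases hD' t with ⟨h₁, -⟩ | ⟨h₁, -, h₃⟩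
    · exact ⟨1, 0, by simp, by simp [h₁]⟩
    · obtain ⟨a, b, hab, h⟩ := hD (φ t)
      refine ⟨c₃ * a, c₁ * b, by simpa [Prod.ext_iff, hc₁, hc₃] using hab, ?_⟩
      rw [h₁, h₃]
      linear_combination (norm := module) (c₁ * c₃) • h
  · refine Or.inr (Or.inl fun t => ?_)
    rcases hD' t with ⟨-, h₂⟩ | ⟨-, h₂, h₃⟩
    · exact ⟨1, 0, by simp, by simp [h₂]⟩
    · obtain ⟨a, b, hab, h⟩ := hD (φ t)
      refine ⟨c₃ * a, b, by simpa [Prod.ext_iff, hc₃] using hab, ?_⟩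
      rw [h₂, h₃]
      linear_combination (norm := module) c₃ • h
  · refine Or.inr (Or.inr ⟨a, c₁ * b, by simpa [Prod.ext_iff, hc₁] using hab, fun t => ?_⟩)
    rcases hD' t with ⟨h₁, h₂⟩ | ⟨h₁, h₂, -⟩
    · simp [h₁, h₂]
    · rw [h₁, h₂]
      linear_combination (norm := module) c₁ • hD (φ t)

end Lamination

section Paths

variable {F : Type*} [NormedAddCommGroup F] [NormedSpace ℝ F] {N : Type*} [TopologicalSpace N]
  [ChartedSpace F N] {W : ℝ × ℝ × ℝ × ℝ → N}

theorem IsFourPath.isThreePath_fix_q (hW : IsFourPath F W) (q : ℝ) :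
    IsThreePath F fun x : ℝ × ℝ × ℝ => W (q, x.1, x.2.1, x.2.2) := by
  obtain ⟨hsm, ⟨ε, hε, -, -, hr₀, hr₁, hs₀, hs₁, ht₀, ht₁⟩, hT₀, hT₁⟩ := hW
  exact ⟨hsm.comp (ContDiff.contMDiff (by fun_prop)),
    ⟨ε, hε, hr₀ q, hr₁ q, hs₀ q, hs₁ q, ht₀ q, ht₁ q⟩,
    fun r s r' s' => hT₀ q r s q r' s', fun r s r' s' => hT₁ q r s q r' s'⟩

theorem IsFourPath.isThreePath_fix_r (hW : IsFourPath F W) (r : ℝ) :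
    IsThreePath F fun x : ℝ × ℝ × ℝ => W (x.1, r, x.2.1, x.2.2) := by
  obtain ⟨hsm, ⟨ε, hε, hq₀, hq₁, -, -, hs₀, hs₁, ht₀, ht₁⟩, hT₀, hT₁⟩ := hW
  exact ⟨hsm.comp (ContDiff.contMDiff (by fun_prop)),
    ⟨ε, hε, (hq₀ · r), (hq₁ · r), (hs₀ · r), (hs₁ · r), (ht₀ · r), (ht₁ · r)⟩,
    fun q s q' s' => hT₀ q r s q' r s', fun q s q' s' => hT₁ q r s q' r s'⟩

theorem IsFourPath.isTwoPath_fix_rs (hW : IsFourPath F W) (r s : ℝ) :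
    IsTwoPath F fun x : ℝ × ℝ => W (x.1, r, s, x.2) := by
  obtain ⟨hsm, ⟨ε, hε, hq₀, hq₁, -, -, -, -, ht₀, ht₁⟩, hT₀, hT₁⟩ := hW
  exact ⟨hsm.comp (ContDiff.contMDiff (by fun_prop)),
    ⟨ε, hε, (hq₀ · r s), (hq₁ · r s), (ht₀ · r s), (ht₁ · r s)⟩,
    fun q q' => hT₀ q r s q' r s, fun q q' => hT₁ q r s q' r s⟩

theorem IsRank3Homotopy.isGoodThreePath_fix_q (hW : IsRank3Homotopy F W) (q : ℝ) :
    IsGoodThreePath F fun x : ℝ × ℝ × ℝ => W (q, x.1, x.2.1, x.2.2) :=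
  ⟨hW.1.isThreePath_fix_q q, hW.2.2.2.2.1 q, hW.2.2.2.2.2.1 q⟩

end Paths

noncomputable def whiskerHomotopy {Y : Type*} (h : ℝ × ℝ → Y) (W : ℝ × ℝ × ℝ × ℝ → Y) :
    ℝ × ℝ × ℝ × ℝ → Y :=
  glueAlong (·.1) (1 / 2)
    (glueAlong (·.2.2.2) (1 / 2) (fun p => h (2 * p.1, 2 * p.2.2.2))
      (fun p => W (0, p.2.1, p.2.2.1, 2 * p.2.2.2 - 1)))
    (glueAlong (·.2.2.2) (1 / 2) (fun p => h (1, 2 * p.2.2.2))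
      (fun p => W (2 * p.1 - 1, p.2.1, p.2.2.1, 2 * p.2.2.2 - 1)))

theorem whiskerHomotopy_congr_middle {Y : Type*} {h : ℝ × ℝ → Y} {W : ℝ × ℝ × ℝ × ℝ → Y}
    {r s r' s' : ℝ} (hW : ∀ q t, W (q, r, s, t) = W (q, r', s', t)) (q t : ℝ) :
    whiskerHomotopy h W (q, r, s, t) = whiskerHomotopy h W (q, r', s', t) := by
  simp only [whiskerHomotopy, glueAlong, hW]

theorem whiskerHomotopy_apply_t_zero {Y : Type*} {h : ℝ × ℝ → Y} {W : ℝ × ℝ × ℝ × ℝ → Y}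
    (hh₀ : ∀ q q', h (q, 0) = h (q', 0)) (q r s : ℝ) :
    whiskerHomotopy h W (q, r, s, 0) = h (0, 0) := by
  simp only [whiskerHomotopy, glueAlong, show (0 : ℝ) ≤ 1 / 2 by norm_num, ↓reduceIte, mul_zero]
  split_ifs <;> exact hh₀ _ 0

theorem whiskerHomotopy_apply_t_one {Y : Type*} {h : ℝ × ℝ → Y} {W : ℝ × ℝ × ℝ × ℝ → Y}
    (hW₁ : ∀ q r s q' r' s', W (q, r, s, 1) = W (q', r', s', 1)) (q r s : ℝ) :
    whiskerHomotopy h W (q, r, s, 1) = W (0, 0, 0, 1) := by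
  simp only [whiskerHomotopy, glueAlong, show ¬(1 : ℝ) ≤ 1 / 2 by norm_num, ↓reduceIte,
    show (2 : ℝ) * 1 - 1 = 1 by norm_num]
  split_ifs <;> exact hW₁ _ r s 0 0 0

theorem whiskerHomotopy_fix_q_zero {Y : Type*} (h : ℝ × ℝ → Y) (W : ℝ × ℝ × ℝ × ℝ → Y) :
    (fun x : ℝ × ℝ × ℝ => whiskerHomotopy h W (0, x.1, x.2.1, x.2.2)) =
      leftWhisker3 (fun t => h (0, t)) fun x => W (0, x.1, x.2.1, x.2.2) := by
  funext x
  simp [whiskerHomotopy, glueAlong, leftWhisker3]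

theorem whiskerHomotopy_fix_q_one {Y : Type*} (h : ℝ × ℝ → Y) (W : ℝ × ℝ × ℝ × ℝ → Y) :
    (fun x : ℝ × ℝ × ℝ => whiskerHomotopy h W (1, x.1, x.2.1, x.2.2)) =
      leftWhisker3 (fun t => h (1, t)) fun x => W (1, x.1, x.2.1, x.2.2) := by
  funext x
  norm_num [whiskerHomotopy, glueAlong, leftWhisker3]

section WhiskerHomotopy

open Filter Topology

variable {F : Type*} [NormedAddCommGroup F] [NormedSpace ℝ F] {N : Type*} [TopologicalSpace N]
  [ChartedSpace F N]
  {h : ℝ × ℝ → N} {W : ℝ × ℝ × ℝ × ℝ → N}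

theorem whiskerHomotopy_comp_eventuallyEq (hh : IsTwoPath F h) (hW : IsFourPath F W)
    (hhW : h (0, 1) = W (0, 0, 0, 0)) {X : Type*} [TopologicalSpace X]
    {ι : X → ℝ × ℝ × ℝ × ℝ} (hι : Continuous ι) (x : X) :
    ((ι x).1 ≤ 1 / 2 →
      ((fun y => whiskerHomotopy h W (ι y)) =ᶠ[𝓝 x]
          fun y => h (2 * (ι y).1, 2 * (ι y).2.2.2)) ∨
        (fun y => whiskerHomotopy h W (ι y)) =ᶠ[𝓝 x]
          fun y => W (0, (ι y).2.1, (ι y).2.2.1, 2 * (ι y).2.2.2 - 1)) ∧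
    (1 / 2 < (ι x).1 →
      ((fun y => whiskerHomotopy h W (ι y)) =ᶠ[𝓝 x] fun y => h (1, 2 * (ι y).2.2.2)) ∨
        (fun y => whiskerHomotopy h W (ι y)) =ᶠ[𝓝 x]
          fun y => W (2 * (ι y).1 - 1, (ι y).2.1, (ι y).2.2.1, 2 * (ι y).2.2.2 - 1)) := by
  obtain ⟨-, ⟨εh, hεh, -, hh_q1, -, hh_t1⟩, -, hh1⟩ := hh
  obtain ⟨-, ⟨ε, hε, hW_q0, -, -, -, -, -, hW_t0, -⟩, hW0, -⟩ := hW
  have hδ : 0 < ε / 2 := by positivity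
  -- both sides of the seam `t = 1/2` take the value `h (0, 1)` near it
  have h_seam : ∀ q t, 1 ≤ t → h (q, t) = h (0, 1) := fun q t ht =>
    (hh_t1 q t (by linarith)).trans (hh1 q 0)
  have W_seam : ∀ q r s t, t ≤ ε → W (q, r, s, t) = h (0, 1) := fun q r s t ht =>
    (hW_t0 q r s t ht).trans ((hW0 q r s 0 0 0).trans hhW.symm)
  have ht : Continuous fun p : ℝ × ℝ × ℝ × ℝ => p.2.2.2 := by fun_prop
  have band_left : ∀ p : ℝ × ℝ × ℝ × ℝ, 1 / 2 < p.2.2.2 → p.2.2.2 < 1 / 2 + ε / 2 →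
      h (2 * p.1, 2 * p.2.2.2) = W (0, p.2.1, p.2.2.1, 2 * p.2.2.2 - 1) := fun p h₁ h₂ =>
    (h_seam _ _ (by linarith)).trans (W_seam _ _ _ _ (by linarith)).symm
  have band_right : ∀ p : ℝ × ℝ × ℝ × ℝ, 1 / 2 < p.2.2.2 → p.2.2.2 < 1 / 2 + ε / 2 →
      h (1, 2 * p.2.2.2) = W (2 * p.1 - 1, p.2.1, p.2.2.1, 2 * p.2.2.2 - 1) := fun p h₁ h₂ =>
    (h_seam _ _ (by linarith)).trans (W_seam _ _ _ _ (by linarith)).symm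
  have band_mid : ∀ p : ℝ × ℝ × ℝ × ℝ, 1 / 2 < p.1 → p.1 < 1 / 2 + ε / 2 →
      glueAlong (·.2.2.2) (1 / 2) (fun p => h (2 * p.1, 2 * p.2.2.2))
          (fun p => W (0, p.2.1, p.2.2.1, 2 * p.2.2.2 - 1)) p =
        glueAlong (·.2.2.2) (1 / 2) (fun p => h (1, 2 * p.2.2.2))
          (fun p => W (2 * p.1 - 1, p.2.1, p.2.2.1, 2 * p.2.2.2 - 1)) p := by
    intro p h₁ h₂
    simp only [glueAlong]
    split_ifs
    · exact hh_q1 _ _ (by linarith)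
    · exact (hW_q0 _ _ _ _ (by linarith)).symm
  refine ⟨fun hx => ?_, fun hx => ?_⟩ <;> rcases le_or_gt (ι x).2.2.2 (1 / 2) with hxt | hxt
  · exact Or.inl (((glueAlong_eventuallyEq_left continuous_fst hδ band_mid hx).trans
      (glueAlong_eventuallyEq_left ht hδ band_left hxt)).comp_tendsto (hι.tendsto x))
  · exact Or.inr (((glueAlong_eventuallyEq_left continuous_fst hδ band_mid hx).trans
      (glueAlong_eventuallyEq_right ht hxt)).comp_tendsto (hι.tendsto x))
  · exact Or.inl (((glueAlong_eventuallyEq_right continuous_fst hx).trans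
      (glueAlong_eventuallyEq_left ht hδ band_right hxt)).comp_tendsto (hι.tendsto x))
  · exact Or.inr (((glueAlong_eventuallyEq_right continuous_fst hx).trans
      (glueAlong_eventuallyEq_right ht hxt)).comp_tendsto (hι.tendsto x))

theorem contMDiff_whiskerHomotopy (hh : IsTwoPath F h) (hW : IsFourPath F W)
    (hhW : h (0, 1) = W (0, 0, 0, 0)) :
    ContMDiff 𝓘(ℝ, ℝ × ℝ × ℝ × ℝ) 𝓘(ℝ, F) (⊤ : ℕ∞) (whiskerHomotopy h W) := by
  intro x
  have smooth_h : ∀ A : ℝ × ℝ × ℝ × ℝ → ℝ × ℝ, ContDiff ℝ (⊤ : ℕ∞) A →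
      ContMDiffAt 𝓘(ℝ, ℝ × ℝ × ℝ × ℝ) 𝓘(ℝ, F) (⊤ : ℕ∞) (fun p => h (A p)) x :=
    fun A hA => (hh.1.comp hA.contMDiff) x
  have smooth_W : ∀ A : ℝ × ℝ × ℝ × ℝ → ℝ × ℝ × ℝ × ℝ, ContDiff ℝ (⊤ : ℕ∞) A →
      ContMDiffAt 𝓘(ℝ, ℝ × ℝ × ℝ × ℝ) 𝓘(ℝ, F) (⊤ : ℕ∞) (fun p => W (A p)) x :=
    fun A hA => (hW.1.comp hA.contMDiff) x
  have local_form := whiskerHomotopy_comp_eventuallyEq hh hW hhW continuous_id x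
  rcases le_or_gt x.1 (1 / 2) with hx | hx
  · rcases local_form.1 hx with H | H
    · exact (smooth_h _ (by fun_prop)).congr_of_eventuallyEq H
    · exact (smooth_W _ (by fun_prop)).congr_of_eventuallyEq H
  · rcases local_form.2 hx with H | H
    · exact (smooth_h _ (by fun_prop)).congr_of_eventuallyEq H
    · exact (smooth_W _ (by fun_prop)).congr_of_eventuallyEq H

theorem isFourPath_whiskerHomotopy (hh : IsTwoPath F h) (hW : IsFourPath F W)
    (hhW : h (0, 1) = W (0, 0, 0, 0)) : IsFourPath F (whiskerHomotopy h W) := by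
  have hsm := contMDiff_whiskerHomotopy hh hW hhW
  obtain ⟨-, ⟨εh, hεh, hh_q₀, -, hh_t₀, -⟩, hh₀, -⟩ := hh
  obtain ⟨-, ⟨ε, hε, -, hW_q₁, hW_r₀, hW_r₁, hW_s₀, hW_s₁, -, hW_t₁⟩, -, hW₁⟩ := hW
  set ε₀ := min (1 / 2) (min εh ε) / 2 with hε₀
  have hε₀_pos : 0 < ε₀ := by positivity
  have hε₀_le : ε₀ ≤ 1 / 4 ∧ 2 * ε₀ ≤ εh ∧ 2 * ε₀ ≤ ε := by
    refine ⟨?_, ?_, ?_⟩ <;> simp only [hε₀] <;> linarith [min_le_left (1 / 2) (min εh ε),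
      min_le_right (1 / 2) (min εh ε), min_le_left εh ε, min_le_right εh ε]
  have hle₀ : (0 : ℝ) ≤ 1 / 2 := by norm_num
  have hnle₁ : ¬(1 : ℝ) ≤ 1 / 2 := by norm_num
  refine ⟨hsm, ⟨ε₀, hε₀_pos, fun q r s t hq => ?_, fun q r s t hq => ?_,
    fun q r s t hr => whiskerHomotopy_congr_middle (hW_r₀ · r s · (by linarith)) q t,
    fun q r s t hr => whiskerHomotopy_congr_middle (hW_r₁ · r s · (by linarith)) q t,
    fun q r s t hs => whiskerHomotopy_congr_middle (hW_s₀ · r s · (by linarith)) q t,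
    fun q r s t hs => whiskerHomotopy_congr_middle (hW_s₁ · r s · (by linarith)) q t,
    fun q r s t ht => ?_, fun q r s t ht => ?_⟩,
    fun q r s q' r' s' => (whiskerHomotopy_apply_t_zero hh₀ q r s).trans
      (whiskerHomotopy_apply_t_zero hh₀ q' r' s').symm,
    fun q r s q' r' s' => (whiskerHomotopy_apply_t_one hW₁ q r s).trans
      (whiskerHomotopy_apply_t_one hW₁ q' r' s').symm⟩
  · simp only [whiskerHomotopy, glueAlong, show q ≤ 1 / 2 by linarith, hle₀, ↓reduceIte, mul_zero]
    split_ifs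
    · exact hh_q₀ _ _ (by linarith)
    · rfl
  · simp only [whiskerHomotopy, glueAlong, show ¬q ≤ 1 / 2 by linarith, hnle₁, ↓reduceIte]
    split_ifs
    · rfl
    · rw [hW_q₁ _ _ _ _ (by linarith)]
      norm_num
  · simp only [whiskerHomotopy, glueAlong, show t ≤ 1 / 2 by linarith, hle₀, ↓reduceIte, mul_zero]
    split_ifs <;> exact hh_t₀ _ _ (by linarith)
  · simp only [whiskerHomotopy, glueAlong, show ¬t ≤ 1 / 2 by linarith, hnle₁, ↓reduceIte]
    split_ifs <;> rw [hW_t₁ _ _ _ _ (by linarith)] <;> norm_num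

theorem mfderivRankLE_whiskerHomotopy_comp (hh : IsTwoPath F h) (hW : IsFourPath F W)
    (hhW : h (0, 1) = W (0, 0, 0, 0)) {P : Type*} [NormedAddCommGroup P] [NormedSpace ℝ P]
    {ι : P → ℝ × ℝ × ℝ × ℝ} (hι : Continuous ι) {k : ℕ}
    (h₁ : MFDerivRankLE 𝓘(ℝ, F) k fun y => h (2 * (ι y).1, 2 * (ι y).2.2.2))
    (h₂ : MFDerivRankLE 𝓘(ℝ, F) k fun y => W (0, (ι y).2.1, (ι y).2.2.1, 2 * (ι y).2.2.2 - 1))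
    (h₃ : MFDerivRankLE 𝓘(ℝ, F) k fun y => h (1, 2 * (ι y).2.2.2))
    (h₄ : MFDerivRankLE 𝓘(ℝ, F) k
      fun y => W (2 * (ι y).1 - 1, (ι y).2.1, (ι y).2.2.1, 2 * (ι y).2.2.2 - 1)) :
    MFDerivRankLE 𝓘(ℝ, F) k fun y => whiskerHomotopy h W (ι y) := by
  intro x
  have local_form := whiskerHomotopy_comp_eventuallyEq hh hW hhW hι x
  rcases le_or_gt (ι x).1 (1 / 2) with hx | hx
  · rcases local_form.1 hx with H | H
    · rw [H.mfderiv_eq]; exact h₁ x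
    · rw [H.mfderiv_eq]; exact h₂ x
  · rcases local_form.2 hx with H | H
    · rw [H.mfderiv_eq]; exact h₃ x
    · rw [H.mfderiv_eq]; exact h₄ x

theorem isLaminated_whiskerHomotopy_fix_r (hh : IsRank1Homotopy F h) (hW : IsFourPath F W)
    (hhW : h (0, 1) = W (0, 0, 0, 0)) {r₀ : ℝ}
    (hα : IsLaminated F fun u : ℝ × ℝ × ℝ => W (u.1, r₀, u.2.1, u.2.2)) :
    IsLaminated F fun x : ℝ × ℝ × ℝ => whiskerHomotopy h W (x.1, r₀, x.2.1, x.2.2) := by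
  intro q s
  have hι : Continuous fun x : ℝ × ℝ × ℝ => (x.1, r₀, x.2.1, x.2.2) := by fun_prop
  have local_form := fun t => whiskerHomotopy_comp_eventuallyEq hh.1 hW hhW hι (q, s, t)
  have smooth : ∀ A : ℝ × ℝ × ℝ → ℝ × ℝ × ℝ × ℝ, ContDiff ℝ (⊤ : ℕ∞) A → ∀ x,
      MDifferentiableAt 𝓘(ℝ, ℝ × ℝ × ℝ) 𝓘(ℝ, F) (fun p => W (A p)) x :=
    fun A hA x => ((hW.1.comp hA.contMDiff) x).mdifferentiableAt (by simp)
  rcases le_or_gt q (1 / 2) with hq | hq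
  · refine LaminatedAlong.of_forall fun t => ?_
    rcases (local_form t).1 hq with H | H
    · left
      rw [H.mfderiv_eq]
      exact MFDerivRankLE.comp hh.2 (hh.1.1.mdifferentiable (by simp))
        (A := fun x : ℝ × ℝ × ℝ => (2 * x.1, 2 * x.2.2)) (by fun_prop) (q, s, t)
    · right
      rw [H.mfderiv_eq]
      exact mfderiv_apply_eq_zero_of_forall_add_smul (smooth _ (by fun_prop) _) fun τ => by simp
  · have hf₃ : ∀ x, MDifferentiableAt 𝓘(ℝ, ℝ × ℝ × ℝ) 𝓘(ℝ, F)
        (fun x : ℝ × ℝ × ℝ => h (1, 2 * x.2.2)) x :=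
      fun x => ((hh.1.1.comp (ContDiff.contMDiff (by fun_prop))) x).mdifferentiableAt (by simp)
    have hα' : MDifferentiable 𝓘(ℝ, ℝ × ℝ × ℝ) 𝓘(ℝ, F)
        fun u : ℝ × ℝ × ℝ => W (u.1, r₀, u.2.1, u.2.2) :=
      smooth (fun u => (u.1, r₀, u.2.1, u.2.2)) (by fun_prop)
    refine LaminatedAlong.of_rescale (hα (2 * q - 1) s) (φ := fun t => 2 * t - 1) two_ne_zero
      two_ne_zero fun t => ?_
    rcases (local_form t).2 hq with H | H
    · left
      rw [H.mfderiv_eq]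
      exact ⟨mfderiv_apply_eq_zero_of_forall_add_smul (hf₃ _) fun τ => by simp,
        mfderiv_apply_eq_zero_of_forall_add_smul (hf₃ _) fun τ => by simp⟩
    · right
      rw [H.mfderiv_eq]
      exact mfderiv_comp_rescale_apply hα' (q, s, t)

theorem isRank1Homotopy_whiskerHomotopy_fix_rs (hh : IsRank1Homotopy F h) (hW : IsFourPath F W)
    (hhW : h (0, 1) = W (0, 0, 0, 0)) {r₀ s₀ : ℝ}
    (hη : IsRank1Homotopy F fun p : ℝ × ℝ => W (p.1, r₀, s₀, p.2)) :
    IsRank1Homotopy F fun p : ℝ × ℝ => whiskerHomotopy h W (p.1, r₀, s₀, p.2) := by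
  have hh' := hh.1.1.mdifferentiable (by simp)
  have hη' := hη.1.1.mdifferentiable (by simp)
  exact ⟨(isFourPath_whiskerHomotopy hh.1 hW hhW).isTwoPath_fix_rs r₀ s₀,
    mfderivRankLE_whiskerHomotopy_comp hh.1 hW hhW (by fun_prop)
      (MFDerivRankLE.comp hh.2 hh' (A := fun p : ℝ × ℝ => (2 * p.1, 2 * p.2)) (by fun_prop))
      (MFDerivRankLE.comp hη.2 hη' (A := fun p : ℝ × ℝ => (0, 2 * p.2 - 1)) (by fun_prop))
      (MFDerivRankLE.comp hh.2 hh' (A := fun p : ℝ × ℝ => (1, 2 * p.2)) (by fun_prop))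
      (MFDerivRankLE.comp hη.2 hη' (A := fun p : ℝ × ℝ => (2 * p.1 - 1, 2 * p.2 - 1))
        (by fun_prop))⟩

theorem isLaminatedRank2Homotopy_whiskerHomotopy_fix_r (hh : IsRank1Homotopy F h)
    (hW : IsFourPath F W) (hhW : h (0, 1) = W (0, 0, 0, 0)) {r₀ : ℝ}
    (hα : IsLaminatedRank2Homotopy F fun x : ℝ × ℝ × ℝ => W (x.1, r₀, x.2.1, x.2.2)) :
    IsLaminatedRank2Homotopy F
      fun x : ℝ × ℝ × ℝ => whiskerHomotopy h W (x.1, r₀, x.2.1, x.2.2) := by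
  have hh' := hh.1.1.mdifferentiable (by simp)
  have hα' := hα.1.1.1.mdifferentiable (by simp)
  exact ⟨⟨(isFourPath_whiskerHomotopy hh.1 hW hhW).isThreePath_fix_r r₀,
    mfderivRankLE_whiskerHomotopy_comp hh.1 hW hhW (by fun_prop)
      ((MFDerivRankLE.comp hh.2 hh' (A := fun x : ℝ × ℝ × ℝ => (2 * x.1, 2 * x.2.2))
        (by fun_prop)).mono (by norm_num))
      (MFDerivRankLE.comp hα.1.2.1 hα' (A := fun x : ℝ × ℝ × ℝ => (0, x.2.1, 2 * x.2.2 - 1))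
        (by fun_prop))
      ((MFDerivRankLE.comp hh.2 hh' (A := fun x : ℝ × ℝ × ℝ => (1, 2 * x.2.2))
        (by fun_prop)).mono (by norm_num))
      (MFDerivRankLE.comp hα.1.2.1 hα'
        (A := fun x : ℝ × ℝ × ℝ => (2 * x.1 - 1, x.2.1, 2 * x.2.2 - 1)) (by fun_prop)),
    isRank1Homotopy_whiskerHomotopy_fix_rs hh hW hhW (s₀ := 0) hα.1.2.2.1,
    isRank1Homotopy_whiskerHomotopy_fix_rs hh hW hhW (s₀ := 1) hα.1.2.2.2⟩,
    isLaminated_whiskerHomotopy_fix_r hh hW hhW hα.2⟩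

theorem isRank3Homotopy_whiskerHomotopy (hh : IsRank1Homotopy F h) (hW : IsRank3Homotopy F W)
    (hhW : h (0, 1) = W (0, 0, 0, 0)) : IsRank3Homotopy F (whiskerHomotopy h W) := by
  have hh' := hh.1.1.mdifferentiable (by simp)
  have hW' := hW.1.1.mdifferentiable (by simp)
  have slice₀ := isLaminatedRank2Homotopy_whiskerHomotopy_fix_r hh hW.1 hhW hW.2.2.1
  exact ⟨isFourPath_whiskerHomotopy hh.1 hW.1 hhW,
    mfderivRankLE_whiskerHomotopy_comp hh.1 hW.1 hhW (ι := fun p => p) continuous_id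
      ((MFDerivRankLE.comp hh.2 hh'
        (A := fun p : ℝ × ℝ × ℝ × ℝ => (2 * p.1, 2 * p.2.2.2)) (by fun_prop)).mono (by norm_num))
      (MFDerivRankLE.comp hW.2.1 hW'
        (A := fun p : ℝ × ℝ × ℝ × ℝ => (0, p.2.1, p.2.2.1, 2 * p.2.2.2 - 1)) (by fun_prop))
      ((MFDerivRankLE.comp hh.2 hh'
        (A := fun p : ℝ × ℝ × ℝ × ℝ => (1, 2 * p.2.2.2)) (by fun_prop)).mono (by norm_num))
      (MFDerivRankLE.comp hW.2.1 hW'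
        (A := fun p : ℝ × ℝ × ℝ × ℝ => (2 * p.1 - 1, p.2.1, p.2.2.1, 2 * p.2.2.2 - 1))
        (by fun_prop)),
    slice₀, isLaminatedRank2Homotopy_whiskerHomotopy_fix_r hh hW.1 hhW hW.2.2.2.1,
    fun q r r' t => whiskerHomotopy_congr_middle (fun q t => hW.2.2.2.2.1 q r r' t) q t,
    fun q r r' t => whiskerHomotopy_congr_middle (fun q t => hW.2.2.2.2.2.1 q r r' t) q t,
    slice₀.1.2.2.1, slice₀.1.2.2.2⟩

end WhiskerHomotopy

theorem whisker3_rank3Homotopic (J J' : ℝ × ℝ × ℝ → M) (γ γ' : ℝ → M)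
    (HJ : Rank3Homotopic E J J') (Hγ : Rank1Homotopic E γ γ')
    (hmatch : γ 1 = J (0, 0, 0)) :
    IsGoodThreePath E (leftWhisker3 γ J) ∧ IsGoodThreePath E (leftWhisker3 γ' J') ∧
      Rank3Homotopic E (leftWhisker3 γ J) (leftWhisker3 γ' J') := by
  obtain ⟨W, hW, hWJ, hWJ'⟩ := HJ
  obtain ⟨h, hh, hhγ, hhγ'⟩ := Hγ
  have hV := isRank3Homotopy_whiskerHomotopy hh hW (by rw [hhγ, hmatch, hWJ])
  have start : (fun x : ℝ × ℝ × ℝ => whiskerHomotopy h W (0, x.1, x.2.1, x.2.2)) =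
      leftWhisker3 γ J := by
    rw [whiskerHomotopy_fix_q_zero, funext hhγ, funext fun x : ℝ × ℝ × ℝ => hWJ x.1 x.2.1 x.2.2]
  have finish : (fun x : ℝ × ℝ × ℝ => whiskerHomotopy h W (1, x.1, x.2.1, x.2.2)) =
      leftWhisker3 γ' J' := by
    rw [whiskerHomotopy_fix_q_one, funext hhγ', funext fun x : ℝ × ℝ × ℝ => hWJ' x.1 x.2.1 x.2.2]
  exact ⟨start ▸ hV.isGoodThreePath_fix_q 0, finish ▸ hV.isGoodThreePath_fix_q 1,
    whiskerHomotopy h W, hV, fun r s t => congrFun start (r, s, t),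
    fun r s t => congrFun finish (r, s, t)⟩
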